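/- Let ℓ > 2 be an integer and let λ be an (ℓ,0)-JM partition. Then there do not exist a removable box (a,b) of λ and an addable box (c,d) of λ having the same residue modulo ℓ such that the ladder of (a,b) lies strictly to the left of the ladder of (c,d), i.e. such that (b − a) ≡ (d − c) (mod ℓ) and a + (ℓ−1)b < c + (ℓ−1)d. -/

import Mathlib

/-- Rows and columns are `0`-indexed, unlike in the paper. -/
def YoungDiagram.hook (μ : YoungDiagram) (a b : ℕ) : ℕ :=
  (μ.rowLen a - b) + (μ.colLen b - (a + 1))

def IsJM (ℓ : ℕ) (μ : YoungDiagram) : Prop :=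
  ¬ ∃ a b y x : ℕ, (a, b) ∈ μ ∧ (a, y) ∈ μ ∧ (x, b) ∈ μ ∧
      ℓ ∣ μ.hook a b ∧ ¬ ℓ ∣ μ.hook a y ∧ ¬ ℓ ∣ μ.hook x b

def Removable (μ : YoungDiagram) (c : ℕ × ℕ) : Prop :=
  c ∈ μ ∧ ∃ ν : YoungDiagram, ν.cells = μ.cells \ {c}

def Addable (μ : YoungDiagram) (c : ℕ × ℕ) : Prop :=
  c ∉ μ ∧ ∃ ν : YoungDiagram, ν.cells = insert c μ.cells

/-
In a JM partition, once the hook of a box `(c, b)` is divisible by `ℓ` while some hook in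
column `b` is not, every hook in row `c` to the right of `(c, b)` is divisible by `ℓ`. These hooks
strictly decrease, so the hook of `(c, b)` is at least `ℓ` times the number of boxes of row `c`
from column `b` on. For a removable box `(a, b)`, whose hook is `1`, and an addable box `(c, d)` of
the same residue with `b < d` (hence `c ≤ a`), the hook of `(c, b)` is `(d - b) + (a - c)`, so
`(ℓ - 1)(d - b) ≤ a - c`, which is exactly what the ladder condition forbids. When `d ≤ b`,
transposing (which preserves hooks, hence the JM property) gives `(ℓ - 1)(c - a) ≤ b - d`, and
the ladder condition `(ℓ - 1)(b - d) < c - a` contradicts it as `ℓ - 1 ≥ 1`.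
-/

theorem Nat.mul_le_of_strictAnti_of_dvd {ℓ : ℕ} :
    ∀ {k : ℕ} {f : ℕ → ℕ}, (∀ i, i + 1 < k → f (i + 1) < f i) → (∀ i < k, 0 < f i) →
      (∀ i < k, ℓ ∣ f i) → k * ℓ ≤ f 0
  | 0, _, _, _, _ => by simp
  | 1, f, _, hpos, hdvd => by simpa using Nat.le_of_dvd (hpos 0 one_pos) (hdvd 0 one_pos)
  | k + 2, f, hanti, hpos, hdvd => by
    have htail : (k + 1) * ℓ ≤ f 1 :=
      Nat.mul_le_of_strictAnti_of_dvd (f := fun i => f (i + 1)) (fun i hi => hanti _ (by omega))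
        (fun i hi => hpos _ (by omega)) (fun i hi => hdvd _ (by omega))
    have hlt : f 1 < f 0 := hanti 0 (by omega)
    have hstep : ℓ ≤ f 0 - f 1 :=
      Nat.le_of_dvd (Nat.sub_pos_of_lt hlt) (Nat.dvd_sub (hdvd 0 (by omega)) (hdvd 1 (by omega)))
    have : f 1 + ℓ ≤ f 0 := by omega
    linarith

namespace YoungDiagram

variable {μ : YoungDiagram} {a b : ℕ}

theorem hook_pos (h : (a, b) ∈ μ) : 0 < μ.hook a b := by
  have := mem_iff_lt_rowLen.mp h
  unfold hook
  omega

theorem hook_succ_lt (h : (a, b + 1) ∈ μ) : μ.hook a (b + 1) < μ.hook a b := by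
  have := mem_iff_lt_rowLen.mp h
  have := μ.colLen_anti b (b + 1) b.le_succ
  unfold hook
  omega

theorem hook_transpose (μ : YoungDiagram) (a b : ℕ) : μ.transpose.hook a b = μ.hook b a := by
  have hrow := μ.mem_iff_lt_rowLen (i := b) (j := a)
  have hcol := μ.mem_iff_lt_colLen (i := b) (j := a)
  simp only [hook, rowLen_transpose, colLen_transpose]
  by_cases hba : (b, a) ∈ μ <;> simp only [hba, true_iff, false_iff, not_lt] at hrow hcol <;> omega

end YoungDiagram

open YoungDiagram

section

variable {μ : YoungDiagram} {a b c d : ℕ}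

theorem Removable.eq_of_le {i j : ℕ} (h : Removable μ (a, b)) (hij : (i, j) ∈ μ) (hi : a ≤ i)
    (hj : b ≤ j) : (i, j) = (a, b) := by
  obtain ⟨-, ν, hν⟩ := h
  by_contra hne
  have hijν : (i, j) ∈ ν := by
    rw [← mem_cells, hν]
    simp [hij, hne]
  have habν := ν.up_left_mem hi hj hijν
  rw [← mem_cells, hν] at habν
  simp at habν

theorem Removable.rowLen_eq (h : Removable μ (a, b)) : μ.rowLen a = b + 1 := by
  have := mem_iff_lt_rowLen.mp h.1
  have : ¬ b + 1 < μ.rowLen a := fun hlt => by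
    simpa using h.eq_of_le (mem_iff_lt_rowLen.mpr hlt) le_rfl b.le_succ
  omega

theorem Removable.colLen_eq (h : Removable μ (a, b)) : μ.colLen b = a + 1 := by
  have := mem_iff_lt_colLen.mp h.1
  have : ¬ a + 1 < μ.colLen b := fun hlt => by
    simpa using h.eq_of_le (mem_iff_lt_colLen.mpr hlt) a.le_succ le_rfl
  omega

theorem Addable.mem_of_le {i j : ℕ} (h : Addable μ (c, d)) (hi : i ≤ c) (hj : j ≤ d)
    (hne : (i, j) ≠ (c, d)) : (i, j) ∈ μ := by
  obtain ⟨-, ν, hν⟩ := h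
  have hijν : (i, j) ∈ ν := ν.up_left_mem hi hj (by rw [← mem_cells, hν]; simp)
  rw [← mem_cells, hν] at hijν
  simpa [hne] using hijν

theorem Addable.rowLen_eq (h : Addable μ (c, d)) : μ.rowLen c = d := by
  have : ¬ d < μ.rowLen c := fun hlt => h.1 (mem_iff_lt_rowLen.mpr hlt)
  rcases d with _ | d
  · omega
  · have := mem_iff_lt_rowLen.mp (h.mem_of_le le_rfl d.le_succ (by simp))
    omega

theorem Addable.colLen_eq (h : Addable μ (c, d)) : μ.colLen d = c := by
  have : ¬ c < μ.colLen d := fun hlt => h.1 (mem_iff_lt_colLen.mpr hlt)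
  rcases c with _ | c
  · omega
  · have := mem_iff_lt_colLen.mp (h.mem_of_le c.le_succ le_rfl (by simp))
    omega

end

namespace IsJM

variable {ℓ : ℕ} {μ : YoungDiagram}

theorem transpose (h : IsJM ℓ μ) : IsJM ℓ μ.transpose := by
  rintro ⟨a, b, y, x, hab, hay, hxb, hdvd, hay', hxb'⟩
  simp only [mem_transpose, Prod.swap_prod_mk, hook_transpose] at *
  exact h ⟨b, a, x, y, hab, hxb, hay, hdvd, hxb', hay'⟩

theorem dvd_hook_of_mem_row {b c x y : ℕ} (h : IsJM ℓ μ) (hxb : (x, b) ∈ μ)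
    (hxb' : ¬ ℓ ∣ μ.hook x b) (hcb : (c, b) ∈ μ) (hdvd : ℓ ∣ μ.hook c b) (hcy : (c, y) ∈ μ) :
    ℓ ∣ μ.hook c y := by
  by_contra hcy'
  exact h ⟨c, b, y, x, hcb, hcy, hxb, hdvd, hcy', hxb'⟩

theorem mul_le_hook {b c x : ℕ} (h : IsJM ℓ μ) (hxb : (x, b) ∈ μ) (hxb' : ¬ ℓ ∣ μ.hook x b)
    (hcb : (c, b) ∈ μ) (hdvd : ℓ ∣ μ.hook c b) : (μ.rowLen c - b) * ℓ ≤ μ.hook c b := by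
  have hmem : ∀ i < μ.rowLen c - b, (c, b + i) ∈ μ := fun i hi =>
    mem_iff_lt_rowLen.mpr (by omega)
  exact Nat.mul_le_of_strictAnti_of_dvd (f := fun i => μ.hook c (b + i))
    (fun i hi => hook_succ_lt (hmem (i + 1) hi)) (fun i hi => hook_pos (hmem i hi))
    (fun i hi => h.dvd_hook_of_mem_row hxb hxb' hcb hdvd (hmem i hi))

theorem sub_mul_le_of_corner {a b c d : ℕ} (h : IsJM ℓ μ) (hℓ : ℓ ≠ 1)
    (hrow_a : μ.rowLen a = b + 1) (hcol_b : μ.colLen b = a + 1) (hrow_c : μ.rowLen c = d)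
    (hbd : b < d) (hres : (b : ℤ) - a ≡ d - c [ZMOD ℓ]) :
    ((d : ℤ) - b) * ℓ ≤ (d - b) + (a - c) := by
  have hcb : (c, b) ∈ μ := mem_iff_lt_rowLen.mpr (by omega)
  have hca : c ≤ a := by have := mem_iff_lt_colLen.mp hcb; omega
  have hook_ab : μ.hook a b = 1 := by simp [hook, hrow_a, hcol_b]
  have hook_cb : μ.hook c b = (d - b) + (a - c) := by simp only [hook, hrow_c, hcol_b]; omega
  have hdvd : ℓ ∣ μ.hook c b := by
    have hcast : ((μ.hook c b : ℕ) : ℤ) = (d - c) - (b - a) := by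
      rw [hook_cb]; push_cast [hbd.le, hca]; ring
    exact Int.natCast_dvd_natCast.mp (hcast ▸ hres.dvd)
  have key := h.mul_le_hook (mem_iff_lt_rowLen.mpr (by omega : b < μ.rowLen a))
    (by rw [hook_ab]; exact mt Nat.dvd_one.mp hℓ) hcb hdvd
  rw [hrow_c, hook_cb] at key
  zify [hbd.le, hca] at key
  exact key

end IsJM

/-- An `(ℓ,0)`-JM partition has no removable box `(a,b)` and addable box `(c,d)` of the same
residue with the ladder of `(a,b)` strictly to the left of the ladder of `(c,d)`, i.e. with
`b − a ≡ d − c (mod ℓ)` and `a + (ℓ−1)b < c + (ℓ−1)d`. -/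
theorem JM_no_removable_left_of_addable (ℓ : ℕ) (hℓ : 2 < ℓ) (lam : YoungDiagram)
    (h : IsJM ℓ lam) :
    ¬ ∃ a b c d : ℕ, Removable lam (a, b) ∧ Addable lam (c, d) ∧
        ((b : ℤ) - a) ≡ ((d : ℤ) - c) [ZMOD (ℓ : ℤ)] ∧
        a + (ℓ - 1) * b < c + (ℓ - 1) * d := by
  rintro ⟨a, b, c, d, hrem, hadd, hres, hlad⟩
  have hℓ1 : ℓ ≠ 1 := by omega
  zify [show 1 ≤ ℓ by omega] at hlad
  rcases lt_or_ge b d with hbd | hdb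
  · have := h.sub_mul_le_of_corner hℓ1 hrem.rowLen_eq hrem.colLen_eq hadd.rowLen_eq hbd hres
    nlinarith
  · have hac : a < c := by
      have := lam.colLen_anti d b hdb
      rw [hrem.colLen_eq, hadd.colLen_eq] at this
      omega
    have := h.transpose.sub_mul_le_of_corner hℓ1 (by simpa using hrem.colLen_eq)
      (by simpa using hrem.rowLen_eq) (by simpa using hadd.colLen_eq) hac
      (by simpa only [neg_sub] using hres.neg)
    nlinarith
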